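/- arXiv:1910.09449 — 5 statements merged into one kernel-verified Lean document; each statement's English description precedes it below -/
import Mathlib

section
/- Let m ∈ ℕ and for n = 1,…,m let aₙ, bₙ ∈ ℂ and ωₙ ∈ ℝ. If the function f(t) = Σₙ [aₙ cos(ωₙ t) + bₙ sin(ωₙ t)] satisfies f(t) → 0 as t → ∞, then f(t) = 0 for all t ∈ ℝ. -/
/-!
Writing `f t = F (e^{iω₁t}, e^{iω₂t}, …)` with `F` continuous on the compact torus, the integer
shifts `f (t + k)` become `F (x * g ^ k)` with `x = e^{iωt}` and `g = e^{iω}`. In a compact group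
`1` is a cluster point of the powers `g ^ k`, so `f t = F x` is a cluster point of `f (t + k)` as
`k → ∞`; since these tend to `0`, `f t = 0`.
-/

open Filter Topology

theorem MapClusterPt.eq_of_tendsto {α X : Type*} [TopologicalSpace X] [T2Space X] {F : Filter α}
    {u : α → X} {x y : X} (hx : MapClusterPt x F u) (hy : Tendsto u F (𝓝 y)) : x = y :=
  eq_of_nhds_neBot (hx.clusterPt.mono hy).neBot

theorem eq_of_tendsto_mul_pow {G X : Type*} [Group G] [TopologicalSpace G] [CompactSpace G]
    [IsTopologicalGroup G] [TopologicalSpace X] [T2Space X] {F : G → X} {x : G}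
    (hF : ContinuousAt F x) (g : G) {l : X}
    (h : Tendsto (fun k : ℕ => F (x * g ^ k)) atTop (𝓝 l)) : F x = l := by
  have hcont : ContinuousAt (fun z => F (x * z)) 1 :=
    hF.comp_of_eq (continuous_const_mul x).continuousAt (mul_one x)
  simpa using ((mapClusterPt_one_atTop_pow g).continuousAt_comp hcont).eq_of_tendsto h

theorem eq_of_tendsto_comp_circleExp {ι X : Type*} [TopologicalSpace X] [T2Space X] (ω : ι → ℝ)
    {F : (ι → Circle) → X} (hF : Continuous F) {l : X}
    (h : Tendsto (fun t : ℝ => F fun i => Circle.exp (ω i * t)) atTop (𝓝 l)) (t : ℝ) :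
    (F fun i => Circle.exp (ω i * t)) = l := by
  refine eq_of_tendsto_mul_pow hF.continuousAt (fun i => Circle.exp (ω i)) ?_
  have hshift : ∀ k : ℕ, (fun i => Circle.exp (ω i * (t + k))) =
      (fun i => Circle.exp (ω i * t)) * (fun i => Circle.exp (ω i)) ^ k := by
    intro k
    ext1 i
    simp [mul_add, Circle.exp_add, ← Circle.exp_natCast_mul, mul_comm]
  refine (h.comp (tendsto_atTop_add_const_left _ t tendsto_natCast_atTop_atTop)).congr fun k => ?_
  rw [Function.comp_apply, hshift]

/-- If a finite complex linear combination of sinusoids tends to `0` at `+∞`,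
then it vanishes identically. -/
theorem trig_poly_tendsto_zero_eq_zero
    (m : ℕ) (a b : ℕ → ℂ) (ω : ℕ → ℝ) (f : ℝ → ℂ)
    (hf : ∀ t : ℝ, f t =
      ∑ n ∈ Finset.Icc 1 m, (a n * Real.cos (ω n * t) + b n * Real.sin (ω n * t)))
    (hlim : Filter.Tendsto f Filter.atTop (nhds 0)) :
    ∀ t : ℝ, f t = 0 := by
  let F : (ℕ → Circle) → ℂ := fun z =>
    ∑ n ∈ Finset.Icc 1 m, (a n * (z n : ℂ).re + b n * (z n : ℂ).im)
  have hF : Continuous F := by fun_prop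
  have hfF : f = fun t => F fun n => Circle.exp (ω n * t) := by
    ext t
    simp only [F, hf, Circle.coe_exp, Complex.exp_ofReal_mul_I_re,
      Complex.exp_ofReal_mul_I_im]
  rw [hfF] at hlim ⊢
  exact eq_of_tendsto_comp_circleExp ω hF hlim
end

section
/- Let k̃ ∈ ℝ³ be a unit vector, J_k the cross-product matrix of k̃, and E(t) = cos(t)·I₃ + sin(t)·J_k. Then for all t ∈ ℝ and all z ∈ ℂ³ with z · k̃ = 0, one has |E(t)z| = |z| (with the Hermitian norm on ℂ³). -/
/-!
Write `z = x + i y` with `x, y ∈ ℝ³`. Since `E(t)` has real entries, `|E(t) z|² = |E(t) x|² + |E(t) y|²`,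
and `x, y` are both orthogonal to `k̃`. On the plane `k̃^⊥` the map `J_k` is a rotation by a right
angle (`|k̃ × x| = |x|` and `x ⊥ k̃ × x`), so `E(t)` acts there as the rotation by `t`.
-/

open Matrix

theorem crossMatrix_mulVec {R : Type*} [CommRing R] (k x : Fin 3 → R) :
    Matrix.of ![![0, -k 2, k 1], ![k 2, 0, -k 0], ![-k 1, k 0, 0]] *ᵥ x = k ⨯₃ x := by
  ext i
  fin_cases i <;> simp [mulVec, dotProduct, Fin.sum_univ_three, cross_apply] <;> ring

theorem dotProduct_self_smul_add_smul_cross {R : Type*} [CommRing R] {c s : R}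
    (hcs : c ^ 2 + s ^ 2 = 1) {k x : Fin 3 → R} (hk : k ⬝ᵥ k = 1) (hkx : k ⬝ᵥ x = 0) :
    (c • x + s • k ⨯₃ x) ⬝ᵥ (c • x + s • k ⨯₃ x) = x ⬝ᵥ x := by
  have hcross : k ⨯₃ x ⬝ᵥ k ⨯₃ x = x ⬝ᵥ x := by
    rw [cross_dot_cross, hk, hkx, dotProduct_comm x k, hkx]
    ring
  have hperp : k ⨯₃ x ⬝ᵥ x = 0 := by rw [dotProduct_comm, dot_cross_self]
  simp only [add_dotProduct, dotProduct_add, smul_dotProduct, dotProduct_smul, smul_eq_mul,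
    hcross, hperp, dot_cross_self]
  linear_combination (x ⬝ᵥ x) * hcs

theorem comp_cross_ofReal (f : ℂ →ₗ[ℝ] ℝ) (k : Fin 3 → ℝ) (z : Fin 3 → ℂ) :
    f ∘ ((fun i => (k i : ℂ)) ⨯₃ z) = k ⨯₃ (f ∘ z) := by
  ext i
  fin_cases i <;> simp [cross_apply, ← Complex.real_smul]

theorem EuclideanSpace.norm_sq_eq_re_add_im {ι : Type*} [Fintype ι] (w : ι → ℂ) :
    ‖WithLp.toLp 2 w‖ ^ 2 =
      (Complex.reLm ∘ w) ⬝ᵥ (Complex.reLm ∘ w) + (Complex.imLm ∘ w) ⬝ᵥ (Complex.imLm ∘ w) := by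
  simp [EuclideanSpace.norm_sq_eq, dotProduct, Complex.sq_norm, Complex.normSq_apply,
    Finset.sum_add_distrib]

/-- For a unit vector `k̃ ∈ ℝ³` with cross-product matrix `J_k`, and
`E(t) = cos t · I₃ + sin t · J_k`, one has `|E(t) z| = |z|` (Hermitian norm on
`ℂ³`) for every `t ∈ ℝ` and every `z ∈ ℂ³` with `z · k̃ = 0` (bilinearly). -/
theorem crossMatrix_rot_isometry
    (k : Fin 3 → ℝ) (hk : k 0 ^ 2 + k 1 ^ 2 + k 2 ^ 2 = 1)
    (Jk : Matrix (Fin 3) (Fin 3) ℂ)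
    (hJk : Jk = Matrix.of ![![0, -(k 2 : ℂ), (k 1 : ℂ)],
                            ![(k 2 : ℂ), 0, -(k 0 : ℂ)],
                            ![-(k 1 : ℂ), (k 0 : ℂ), 0]])
    (E : ℝ → Matrix (Fin 3) (Fin 3) ℂ)
    (hE : ∀ t : ℝ, E t = (Real.cos t : ℂ) • (1 : Matrix (Fin 3) (Fin 3) ℂ)
        + (Real.sin t : ℂ) • Jk)
    (z : Fin 3 → ℂ)
    (hz : z 0 * (k 0 : ℂ) + z 1 * (k 1 : ℂ) + z 2 * (k 2 : ℂ) = 0) :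
    ∀ t : ℝ,
      ‖(WithLp.equiv 2 (Fin 3 → ℂ)).symm ((E t).mulVec z)‖
        = ‖(WithLp.equiv 2 (Fin 3 → ℂ)).symm z‖ := by
  intro t
  have hk' : k ⬝ᵥ k = 1 := by simpa [dotProduct, Fin.sum_univ_three, sq] using hk
  have hcs : Real.cos t ^ 2 + Real.sin t ^ 2 = 1 := Real.cos_sq_add_sin_sq t
  have hEz : E t *ᵥ z = (Real.cos t : ℂ) • z + (Real.sin t : ℂ) • (fun i => (k i : ℂ)) ⨯₃ z := by
    have hJz : Jk *ᵥ z = (fun i => (k i : ℂ)) ⨯₃ z := by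
      rw [hJk, ← crossMatrix_mulVec]
    rw [hE, add_mulVec, smul_mulVec, smul_mulVec, one_mulVec, hJz]
  have hpart (f : ℂ →ₗ[ℝ] ℝ) : f ∘ (E t *ᵥ z) =
      Real.cos t • (f ∘ z) + Real.sin t • k ⨯₃ (f ∘ z) := by
    rw [hEz, ← comp_cross_ofReal]
    ext i
    simp only [Function.comp_apply, Pi.add_apply, Pi.smul_apply, smul_eq_mul,
      ← Complex.real_smul, map_add, map_smul]
  have horth (f : ℂ →ₗ[ℝ] ℝ) : k ⬝ᵥ (f ∘ z) = 0 := by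
    have := congrArg f hz
    simp only [map_add, map_zero, mul_comm (z _), ← Complex.real_smul, map_smul] at this
    simpa [dotProduct, Fin.sum_univ_three] using this
  rw [← sq_eq_sq₀ (norm_nonneg _) (norm_nonneg _)]
  simp only [WithLp.equiv_symm_apply, EuclideanSpace.norm_sq_eq_re_add_im]
  rw [hpart, hpart, dotProduct_self_smul_add_smul_cross hcs hk' (horth _),
    dotProduct_self_smul_add_smul_cross hcs hk' (horth _)]
end

section
/- Let k̃ ∈ ℝ³ be a unit vector, P = I₃ − k̃ k̃ᵀ the orthogonal projection onto the plane perpendicular to k̃, and J the matrix with J e₁ = e₂, J e₂ = −e₁, J e₃ = 0 (rotation generator about the vertical axis). Then P J P = k̃₃ J_k, where J_k is the cross-product matrix of k̃ and k̃₃ is the third component of k̃. -/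
/-- For a unit vector `k̃ ∈ ℝ³`, with `P = I₃ − k̃ k̃ᵀ` the orthogonal projection
onto the plane perpendicular to `k̃`, and `J` the rotation generator about the
vertical axis, one has `P J P = k̃₃ J_k`, where `J_k` is the cross-product
matrix of `k̃`. -/
theorem proj_rot_proj_eq
    (k : Fin 3 → ℝ) (hk : k 0 ^ 2 + k 1 ^ 2 + k 2 ^ 2 = 1)
    (P J Jk : Matrix (Fin 3) (Fin 3) ℝ)
    (hP : P = 1 - Matrix.vecMulVec k k)
    (hJ : J = Matrix.of ![![0, -1, 0], ![1, 0, 0], ![0, 0, 0]])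
    (hJk : Jk = Matrix.of ![![0, -(k 2), k 1], ![k 2, 0, -(k 0)], ![-(k 1), k 0, 0]]) :
    P * J * P = k 2 • Jk := by
  subst hP hJ hJk
  ext i j
  fin_cases i <;> fin_cases j <;>
    simp [Matrix.mul_apply, Fin.sum_univ_succ, Matrix.vecMulVec_apply,
      Matrix.one_apply] <;> nlinarith [hk, sq_nonneg (k 0), sq_nonneg (k 1)]
end

section
/- Let X be a normed space over ℝ or ℂ, (αₙ) a strictly increasing sequence of non-negative reals, f : [T,∞) → X, and N ∈ ℕ. If fₙ, gₙ (n = 1,…,N) are X-valued S-polynomials such that both ‖f(t) − Σ fₙ(t) e^{−αₙt}‖ and ‖f(t) − Σ gₙ(t) e^{−αₙt}‖ are O(e^{−(α_N+ε)t}) for some ε > 0, then fₙ = gₙ for all n = 1,…,N. -/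
/-!
An S-polynomial that tends to `0` at infinity vanishes identically. Pairing with continuous
functionals reduces this to real scalars, where `t^m cos (ω t)` and `t^m sin (ω t)` become
combinations of `t^m e^{± i ω t}`. Dividing by the top power `t^M` leaves a trigonometric sum
`∑ a_μ e^{i μ t}` tending to `0`, and the shifted difference `g (t + h) - e^{i ν h} g t` removes the
frequency `ν` while keeping the other coefficients nonzero for a suitable `h`; induction on the
number of frequencies shows that all coefficients vanish.

Subtracting the two expansions gives `∑ₙ e^{-αₙ t} Dₙ t = o(e^{-αₙ t})` for every `n`, where
`Dₙ = fₙ - gₙ`. Multiplying by `e^{α₁ t}`, every term except `D₁` tends to `0` because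
S-polynomials grow at most polynomially, so `D₁ → 0` and hence `D₁ = 0`; then repeat with the
next exponent.
-/

open Filter Asymptotics

/-- An `X`-valued S-polynomial: a finite sum of functions
`t ↦ t^m cos(ωt) Z` and `t ↦ t^m sin(ωt) Z`. -/
def IsSPoly {X : Type*} [AddCommGroup X] [Module ℝ X] (f : ℝ → X) : Prop :=
  ∃ (N : ℕ) (m : Fin N → ℕ) (ω : Fin N → ℝ) (c : Fin N → Bool) (Z : Fin N → X),
    ∀ t : ℝ, f t = ∑ j : Fin N,
      (t ^ m j * (if c j then Real.cos (ω j * t) else Real.sin (ω j * t))) • Z j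

open Topology

section

open Finset Complex

theorem norm_cexp_ofReal_mul_ofReal_mul_I (μ t : ℝ) : ‖cexp (μ * t * I)‖ = 1 := by
  rw [← ofReal_mul, norm_exp_ofReal_mul_I]

theorem cexp_ofReal_mul_add_mul_I (μ t h : ℝ) :
    cexp (μ * ↑(t + h) * I) = cexp (μ * h * I) * cexp (μ * t * I) := by
  rw [← Complex.exp_add]; push_cast; ring_nf

theorem cexp_sub_cexp_ne_zero {μ ν : ℝ} (hne : μ ≠ ν) :
    cexp (μ * ↑(Real.pi / (μ - ν)) * I) - cexp (ν * ↑(Real.pi / (μ - ν)) * I) ≠ 0 := by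
  have hsub : (μ : ℂ) - ν ≠ 0 := by exact_mod_cast sub_ne_zero.2 hne
  have hturn : cexp (μ * ↑(Real.pi / (μ - ν)) * I) = - cexp (ν * ↑(Real.pi / (μ - ν)) * I) := by
    rw [show (μ : ℂ) * ↑(Real.pi / (μ - ν)) * I = ν * ↑(Real.pi / (μ - ν)) * I + Real.pi * I by
      push_cast; field_simp; ring, Complex.exp_add, exp_pi_mul_I, mul_neg_one]
  rw [hturn, ← neg_add', neg_ne_zero, ← two_mul]
  exact mul_ne_zero two_ne_zero (Complex.exp_ne_zero _)

theorem eq_zero_of_tendsto_sum_mul_cexp (S : Finset ℝ) (a : ℝ → ℂ)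
    (h : Tendsto (fun t : ℝ => ∑ μ ∈ S, a μ * cexp (μ * t * I)) atTop (𝓝 0)) :
    ∀ μ ∈ S, a μ = 0 := by
  classical
  induction S using Finset.induction_on generalizing a with
  | empty => simp
  | insert ν S hν ih =>
    -- `g (t + h) - e^{iνh} g t` removes the frequency `ν` and still tends to `0`
    have hshift (h' : ℝ) : Tendsto (fun t : ℝ =>
        ∑ μ ∈ S, a μ * (cexp (μ * h' * I) - cexp (ν * h' * I)) * cexp (μ * t * I))
        atTop (𝓝 0) := by
      have := (h.comp (tendsto_atTop_add_const_right _ h' tendsto_id)).sub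
        (h.const_mul (cexp (ν * h' * I)))
      rw [mul_zero, sub_zero] at this
      refine this.congr fun t => ?_
      rw [Function.comp_apply, id_eq, mul_sum, ← sum_sub_distrib, sum_insert hν]
      simp only [cexp_ofReal_mul_add_mul_I]
      exact (congrArg₂ (· + ·) (by ring : _ = (0 : ℂ)) (sum_congr rfl fun μ _ => by ring)).trans
        (zero_add _)
    have htail : ∀ μ ∈ S, a μ = 0 := fun μ hμ =>
      (mul_eq_zero.1 (ih _ (hshift (Real.pi / (μ - ν))) μ hμ)).resolve_right
        (cexp_sub_cexp_ne_zero (ne_of_mem_of_not_mem hμ hν))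
    have hν0 : Tendsto (fun _ : ℝ => ‖a ν‖) atTop (𝓝 0) := by
      refine (tendsto_norm_zero.comp h).congr fun t => ?_
      rw [Function.comp_apply, sum_insert hν, sum_eq_zero fun μ hμ => by rw [htail μ hμ, zero_mul],
        add_zero, norm_mul, norm_cexp_ofReal_mul_ofReal_mul_I, mul_one]
    rw [forall_mem_insert, norm_eq_zero.1 (tendsto_const_nhds_iff.1 hν0)]
    exact ⟨rfl, htail⟩

theorem sum_mul_cexp_eq_zero_of_tendsto {ι : Type*} (s : Finset ι) (c : ι → ℂ) (ω : ι → ℝ)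
    (h : Tendsto (fun t : ℝ => ∑ j ∈ s, c j * cexp (ω j * t * I)) atTop (𝓝 0)) (t : ℝ) :
    ∑ j ∈ s, c j * cexp (ω j * t * I) = 0 := by
  classical
  have hgroup (t : ℝ) : ∑ j ∈ s, c j * cexp (ω j * t * I)
      = ∑ μ ∈ s.image ω, (∑ j ∈ s with ω j = μ, c j) * cexp (μ * t * I) := by
    rw [← sum_fiberwise_of_maps_to fun j hj => mem_image_of_mem ω hj]
    refine sum_congr rfl fun μ _ => ?_
    rw [sum_mul]
    exact sum_congr rfl fun j hj => by rw [(mem_filter.1 hj).2]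
  rw [hgroup]
  exact sum_eq_zero fun μ hμ => by
    rw [eq_zero_of_tendsto_sum_mul_cexp _ _ (h.congr hgroup) μ hμ, zero_mul]

theorem tendsto_sum_mul_cexp_of_tendsto_sum_mul_pow_mul_cexp {ι : Type*}
    (M : ℕ) (s : Finset ι) (c : ι → ℂ) (m : ι → ℕ) (ω : ι → ℝ) (hm : ∀ j ∈ s, m j ≤ M)
    (h : Tendsto (fun t : ℝ => ∑ j ∈ s, c j * t ^ m j * cexp (ω j * t * I)) atTop (𝓝 0)) :
    Tendsto (fun t : ℝ => ∑ j ∈ s with m j = M, c j * cexp (ω j * t * I)) atTop (𝓝 0) := by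
  have hdiv : Tendsto (fun t : ℝ => (∑ j ∈ s, c j * t ^ m j * cexp (ω j * t * I)) / t ^ M)
      atTop (𝓝 0) := by
    refine squeeze_zero_norm' ?_ (tendsto_norm_zero.comp h)
    filter_upwards [eventually_ge_atTop 1] with t ht
    rw [norm_div, norm_pow, norm_real, Real.norm_of_nonneg (by linarith)]
    exact div_le_self (norm_nonneg _) (one_le_pow₀ ht)
  have hlow : Tendsto (fun t : ℝ =>
      ∑ j ∈ s with m j ≠ M, c j * ↑(t ^ m j / t ^ M) * cexp (ω j * t * I)) atTop (𝓝 0) := by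
    rw [← sum_const_zero (s := s.filter (m · ≠ M))]
    refine tendsto_finsetSum _ fun j hj => squeeze_zero_norm (fun t => le_of_eq ?_) (by
      simpa using ((tendsto_pow_div_pow_atTop_zero (𝕜 := ℝ)
        (lt_of_le_of_ne (hm j (mem_filter.1 hj).1) (mem_filter.1 hj).2)).norm.const_mul ‖c j‖))
    rw [norm_mul, norm_mul, norm_cexp_ofReal_mul_ofReal_mul_I, mul_one, norm_real, norm_div,
      norm_pow, norm_pow, Real.norm_eq_abs]
  rw [← sub_zero (0 : ℂ)]
  refine (hdiv.sub hlow).congr' ?_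
  filter_upwards [eventually_ne_atTop 0] with t ht
  have htop_eq : ∑ j ∈ s with m j = M, c j * t ^ m j * cexp (ω j * t * I) / t ^ M
      = ∑ j ∈ s with m j = M, c j * cexp (ω j * t * I) :=
    sum_congr rfl fun j hj => by
      rw [(mem_filter.1 hj).2, mul_div_right_comm,
        mul_div_cancel_right₀ _ (pow_ne_zero _ (ofReal_ne_zero.2 ht))]
  have hlow_eq : ∑ j ∈ s with m j ≠ M, c j * t ^ m j * cexp (ω j * t * I) / t ^ M
      = ∑ j ∈ s with m j ≠ M, c j * ↑(t ^ m j / t ^ M) * cexp (ω j * t * I) :=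
    sum_congr rfl fun j _ => by push_cast; ring
  rw [← sum_filter_add_sum_filter_not s (m · = M), add_div, sum_div, sum_div, htop_eq,
    hlow_eq, add_sub_cancel_right]

theorem sum_mul_pow_mul_cexp_eq_zero_of_tendsto {ι : Type*} (M : ℕ) (s : Finset ι) (c : ι → ℂ)
    (m : ι → ℕ) (ω : ι → ℝ) (hm : ∀ j ∈ s, m j < M)
    (h : Tendsto (fun t : ℝ => ∑ j ∈ s, c j * t ^ m j * cexp (ω j * t * I)) atTop (𝓝 0))
    (t : ℝ) : ∑ j ∈ s, c j * t ^ m j * cexp (ω j * t * I) = 0 := by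
  classical
  induction M generalizing s with
  | zero => exact sum_eq_zero fun j hj => absurd (hm j hj) (Nat.not_lt_zero _)
  | succ M ih =>
    have htop := sum_mul_cexp_eq_zero_of_tendsto _ c ω
      (tendsto_sum_mul_cexp_of_tendsto_sum_mul_pow_mul_cexp M s c m ω
        (fun j hj => Nat.lt_succ_iff.1 (hm j hj)) h)
    have hsplit (t : ℝ) : ∑ j ∈ s, c j * t ^ m j * cexp (ω j * t * I)
        = ∑ j ∈ s with m j ≠ M, c j * t ^ m j * cexp (ω j * t * I) := by
      rw [← sum_filter_add_sum_filter_not s (m · = M), add_eq_right,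
        ← mul_zero ((t : ℂ) ^ M), ← htop t, mul_sum]
      exact sum_congr rfl fun j hj => by rw [(mem_filter.1 hj).2]; ring
    rw [hsplit]
    exact ih _ (fun j hj => lt_of_le_of_ne (Nat.lt_succ_iff.1 (hm j (mem_filter.1 hj).1))
      (mem_filter.1 hj).2) (h.congr hsplit)

theorem IsSPoly.real_eq_zero_of_tendsto {p : ℝ → ℝ} (hp : IsSPoly p)
    (h : Tendsto p atTop (𝓝 0)) : p = 0 := by
  obtain ⟨n, m, ω, c, Z, hrep⟩ := hp
  -- `cos` and `sin` of `ω t` are combinations of `e^{± i ω t}`; the `Bool` picks the sign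
  let sign : Bool → ℝ := fun b => if b then 1 else -1
  let coeff : Fin n × Bool → ℂ := fun jb => Z jb.1 * if c jb.1 then 1 / 2 else -sign jb.2 * I / 2
  have hexp (t : ℝ) : (p t : ℂ) = ∑ jb : Fin n × Bool,
      coeff jb * t ^ m jb.1 * cexp (↑(sign jb.2 * ω jb.1) * t * I) := by
    rw [hrep t, Fintype.sum_prod_type]
    push_cast
    refine sum_congr rfl fun j _ => ?_
    rw [Fintype.sum_bool]
    cases hc : c j <;> simp [coeff, sign, hc, Complex.cos, Complex.sin] <;> ring
  funext t
  have hcast : Tendsto (fun t => (p t : ℂ)) atTop (𝓝 0) :=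
    (continuous_ofReal.tendsto' 0 0 ofReal_zero).comp h
  have hzero := sum_mul_pow_mul_cexp_eq_zero_of_tendsto (univ.sup m + 1) univ coeff
    (fun jb => m jb.1) (fun jb => sign jb.2 * ω jb.1)
    (fun jb _ => Nat.lt_succ_of_le (le_sup (f := m) (mem_univ jb.1))) (hcast.congr hexp) t
  exact_mod_cast (hexp t).trans hzero

end

section

open Finset

variable {X : Type*}

theorem IsSPoly.sub [AddCommGroup X] [Module ℝ X] {f g : ℝ → X} (hf : IsSPoly f)
    (hg : IsSPoly g) : IsSPoly (fun t => f t - g t) := by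
  obtain ⟨N₁, m₁, ω₁, c₁, Z₁, h₁⟩ := hf
  obtain ⟨N₂, m₂, ω₂, c₂, Z₂, h₂⟩ := hg
  refine ⟨N₁ + N₂, Fin.append m₁ m₂, Fin.append ω₁ ω₂, Fin.append c₁ c₂,
    Fin.append Z₁ (fun j => -Z₂ j), fun t => ?_⟩
  rw [Fin.sum_univ_add]
  simp only [Fin.append_left, Fin.append_right, smul_neg]
  rw [h₁ t, h₂ t, sum_neg_distrib, ← sub_eq_add_neg]

theorem IsSPoly.map [AddCommGroup X] [Module ℝ X] {Y : Type*} [AddCommGroup Y] [Module ℝ Y]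
    {p : ℝ → X} (hp : IsSPoly p) (L : X →ₗ[ℝ] Y) : IsSPoly (fun t => L (p t)) := by
  obtain ⟨n, m, ω, c, Z, hrep⟩ := hp
  exact ⟨n, m, ω, c, fun j => L (Z j), fun t => by simp only [hrep t, map_sum, map_smul]⟩

variable [NormedAddCommGroup X] [NormedSpace ℝ X]

theorem IsSPoly.eq_zero_of_tendsto {p : ℝ → X} (hp : IsSPoly p) (h : Tendsto p atTop (𝓝 0)) :
    p = 0 := by
  funext t
  refine SeparatingDual.eq_zero_of_forall_dual_eq_zero (R := ℝ) fun φ => ?_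
  exact congrFun ((hp.map φ.toLinearMap).real_eq_zero_of_tendsto
    ((φ.continuous.tendsto' 0 0 (map_zero φ)).comp h)) t

theorem IsSPoly.tendsto_exp_neg_mul_smul {p : ℝ → X} (hp : IsSPoly p) {c : ℝ} (hc : 0 < c) :
    Tendsto (fun t => Real.exp (-c * t) • p t) atTop (𝓝 0) := by
  obtain ⟨n, m, ω, b, Z, hrep⟩ := hp
  have hterm (j : Fin n) : Tendsto (fun t => Real.exp (-c * t) *
      (t ^ m j * if b j then Real.cos (ω j * t) else Real.sin (ω j * t))) atTop (𝓝 0) := by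
    refine squeeze_zero_norm' ?_ (tendsto_rpow_mul_exp_neg_mul_atTop_nhds_zero (m j) c hc)
    filter_upwards [eventually_ge_atTop 0] with t ht
    have htrig : |if b j then Real.cos (ω j * t) else Real.sin (ω j * t)| ≤ 1 := by
      split
      · exact Real.abs_cos_le_one _
      · exact Real.abs_sin_le_one _
    rw [Real.norm_eq_abs, abs_mul, abs_mul, Real.abs_exp, abs_pow, abs_of_nonneg ht,
      Real.rpow_natCast, mul_comm]
    exact mul_le_mul_of_nonneg_right (mul_le_of_le_one_right (by positivity) htrig)
      (Real.exp_pos _).le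
  simp only [hrep, smul_sum, smul_smul]
  simpa using tendsto_finsetSum univ fun j _ => (hterm j).smul_const (Z j)

theorem eq_zero_of_sum_exp_neg_mul_smul_isLittleO {ι : Type*} (s : Finset ι) (α : ι → ℝ)
    (hα : Set.InjOn α s) (D : ι → ℝ → X) (hD : ∀ i ∈ s, IsSPoly (D i))
    (h : ∀ i ∈ s, (fun t => ∑ j ∈ s, Real.exp (-α j * t) • D j t)
      =o[atTop] fun t => Real.exp (-α i * t)) :
    ∀ i ∈ s, D i = 0 := by
  classical
  induction s using Finset.induction_on_min_value α with
  | empty => simp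
  | insert a s ha hmin ih =>
    -- the slowest-decaying term dominates: after multiplying by `e^{α a t}` all others vanish
    have hDa : D a = 0 := by
      refine (hD a (mem_insert_self a s)).eq_zero_of_tendsto ?_
      have hscaled : Tendsto (fun t => Real.exp (α a * t) •
          ∑ j ∈ insert a s, Real.exp (-α j * t) • D j t) atTop (𝓝 0) := by
        rw [← isLittleO_one_iff ℝ]
        refine ((isBigO_refl (fun t => Real.exp (α a * t)) atTop).smul_isLittleO
          (h a (mem_insert_self a s))).congr_right fun t => ?_
        rw [smul_eq_mul, ← Real.exp_add, neg_mul, add_neg_cancel, Real.exp_zero]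
      have hrest : Tendsto (fun t => ∑ j ∈ s, Real.exp (-(α j - α a) * t) • D j t)
          atTop (𝓝 0) := by
        rw [← sum_const_zero (s := s)]
        refine tendsto_finsetSum s fun j hj =>
          (hD j (mem_insert_of_mem hj)).tendsto_exp_neg_mul_smul (sub_pos.2 ?_)
        exact lt_of_le_of_ne (hmin j hj) (hα.ne (mem_insert_self a s) (mem_insert_of_mem hj)
          (ne_of_mem_of_not_mem hj ha).symm)
      rw [← sub_zero (0 : X)]
      refine (hscaled.sub hrest).congr fun t => ?_
      rw [sum_insert ha, smul_add, smul_smul, ← Real.exp_add, neg_mul, add_neg_cancel,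
        Real.exp_zero, one_smul, smul_sum, add_sub_assoc, ← sum_sub_distrib, add_eq_left]
      refine sum_eq_zero fun j _ => ?_
      rw [smul_smul, ← Real.exp_add, sub_eq_zero]
      congr 2
      ring
    have hsum (t : ℝ) : ∑ j ∈ insert a s, Real.exp (-α j * t) • D j t
        = ∑ j ∈ s, Real.exp (-α j * t) • D j t := by
      rw [sum_insert ha, hDa, Pi.zero_apply, smul_zero, zero_add]
    refine (forall_mem_insert a s _).2 ⟨hDa, ih (hα.mono (subset_insert a s))
      (fun i hi => hD i (mem_insert_of_mem hi)) fun i hi => ?_⟩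
    exact (h i (mem_insert_of_mem hi)).congr_left hsum

end

theorem isLittleO_exp_neg_mul_exp_neg_mul {a b : ℝ} (hab : a < b) :
    (fun t : ℝ => Real.exp (-b * t)) =o[atTop] fun t => Real.exp (-a * t) :=
  Real.isLittleO_exp_comp_exp_comp.2 <|
    (tendsto_id.const_mul_atTop (sub_pos.2 hab)).congr fun t => by simp only [id]; ring

theorem expansion_coefficients_unique_general
    {X : Type*} [NormedAddCommGroup X] [NormedSpace ℝ X]
    (α : ℕ → ℝ) (hmono : StrictMono α)
    (f : ℝ → X) (N : ℕ) (fn gn : ℕ → ℝ → X)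
    (hfn : ∀ n ∈ Finset.Icc 1 N, IsSPoly (fn n))
    (hgn : ∀ n ∈ Finset.Icc 1 N, IsSPoly (gn n))
    (hf : ∃ ε > 0,
      (fun t : ℝ => f t - ∑ n ∈ Finset.Icc 1 N, Real.exp (-(α n) * t) • fn n t)
        =O[atTop] fun t : ℝ => Real.exp (-(α N + ε) * t))
    (hg : ∃ ε > 0,
      (fun t : ℝ => f t - ∑ n ∈ Finset.Icc 1 N, Real.exp (-(α n) * t) • gn n t)
        =O[atTop] fun t : ℝ => Real.exp (-(α N + ε) * t)) :
    ∀ n ∈ Finset.Icc 1 N, fn n = gn n := by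
  obtain ⟨ε₁, hε₁, h₁⟩ := hf
  obtain ⟨ε₂, hε₂, h₂⟩ := hg
  have hsmall : ∀ n ∈ Finset.Icc 1 N,
      (fun t => ∑ k ∈ Finset.Icc 1 N, Real.exp (-α k * t) • (fn k t - gn k t))
        =o[atTop] fun t => Real.exp (-α n * t) := by
    intro n hn
    have hαn : α n ≤ α N := hmono.monotone (Finset.mem_Icc.1 hn).2
    refine ((h₂.trans_isLittleO (isLittleO_exp_neg_mul_exp_neg_mul (by linarith))).sub
      (h₁.trans_isLittleO (isLittleO_exp_neg_mul_exp_neg_mul (by linarith)))).congr_left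
      fun t => ?_
    simp only [smul_sub, Finset.sum_sub_distrib]
    abel
  intro n hn
  funext t
  exact sub_eq_zero.1 <| congrFun (eq_zero_of_sum_exp_neg_mul_smul_isLittleO _ α
    hmono.injective.injOn (fun k t => fn k t - gn k t) (fun k hk => (hfn k hk).sub (hgn k hk))
    hsmall n hn) t

/-- Uniqueness of the S-polynomial coefficients in an asymptotic expansion. -/
theorem expansion_coefficients_unique
    {X : Type*} [NormedAddCommGroup X] [NormedSpace ℝ X]
    (α : ℕ → ℝ) (hmono : StrictMono α) (hnonneg : ∀ n, 0 ≤ α n)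
    (f : ℝ → X) (N : ℕ) (fn gn : ℕ → ℝ → X)
    (hfn : ∀ n ∈ Finset.Icc 1 N, IsSPoly (fn n))
    (hgn : ∀ n ∈ Finset.Icc 1 N, IsSPoly (gn n))
    (hf : ∃ ε > 0,
      (fun t : ℝ => f t - ∑ n ∈ Finset.Icc 1 N, Real.exp (-(α n) * t) • fn n t)
        =O[atTop] fun t : ℝ => Real.exp (-(α N + ε) * t))
    (hg : ∃ ε > 0,
      (fun t : ℝ => f t - ∑ n ∈ Finset.Icc 1 N, Real.exp (-(α n) * t) • gn n t)
        =O[atTop] fun t : ℝ => Real.exp (-(α N + ε) * t)) :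
    ∀ n ∈ Finset.Icc 1 N, fn n = gn n :=
  expansion_coefficients_unique_general α hmono f N fn gn hfn hgn hf hg
end

section
/- Let z : ℝ → X, z(t) = Σ_{n=1}^{N} [aₙ cos(ωₙ t) + bₙ sin(ωₙ t)] with aₙ, bₙ in a normed space X and ωₙ ∈ ℝ. If ‖z(t)‖_X → 0 as t → ∞, then z is identically zero. -/
open Filter

/-- Pigeonhole: a sequence in a ball of a finite product of `ℝ` has two
distinct terms at distance `< δ`. -/
lemma exists_pair_dist_lt {ι : Type*} [Fintype ι] (p : ℕ → ι → ℝ)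
    (hb : ∀ k, p k ∈ Metric.closedBall (0 : ι → ℝ) 1) {δ : ℝ} (hδ : 0 < δ) :
    ∃ j k : ℕ, j < k ∧ dist (p j) (p k) < δ := by
  obtain ⟨x, -, φ, hφ, hlim⟩ :=
    tendsto_subseq_of_bounded Metric.isBounded_closedBall hb
  have h := (Metric.tendsto_atTop.mp hlim) (δ/2) (by linarith)
  obtain ⟨n₀, hn₀⟩ := h
  refine ⟨φ n₀, φ (n₀+1), hφ (Nat.lt_succ_self n₀), ?_⟩
  have h1 := hn₀ n₀ le_rfl
  have h2 := hn₀ (n₀+1) (Nat.le_succ n₀)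
  calc dist (p (φ n₀)) (p (φ (n₀+1)))
      ≤ dist (p (φ n₀)) x + dist (p (φ (n₀+1))) x := dist_triangle_right _ _ _
    _ < δ/2 + δ/2 := add_lt_add h1 h2
    _ = δ := by ring

/-- If `(cos A, sin A)` is within `δ` of `(cos B, sin B)` componentwise, then
shifting by `A - B` moves `cos` and `sin` by at most `4δ`. -/
lemma trig_shift_bound {A B δ : ℝ} (hc : |Real.cos A - Real.cos B| ≤ δ)
    (hs : |Real.sin A - Real.sin B| ≤ δ) (θ : ℝ) :
    |Real.cos (θ + (A - B)) - Real.cos θ| ≤ 4 * δ ∧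
    |Real.sin (θ + (A - B)) - Real.sin θ| ≤ 4 * δ := by
  have hca : |Real.cos (A - B) - 1| ≤ 2 * δ := by
    have : Real.cos (A - B) - 1 =
        (Real.cos A - Real.cos B) * Real.cos B +
        (Real.sin A - Real.sin B) * Real.sin B := by
      have := Real.sin_sq_add_cos_sq B
      rw [Real.cos_sub]; ring_nf; nlinarith [Real.sin_sq_add_cos_sq B]
    rw [this]
    calc |(Real.cos A - Real.cos B) * Real.cos B +
          (Real.sin A - Real.sin B) * Real.sin B|
        ≤ |(Real.cos A - Real.cos B) * Real.cos B| +
          |(Real.sin A - Real.sin B) * Real.sin B| := abs_add_le _ _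
      _ ≤ δ + δ := add_le_add
          ((abs_mul _ _).le.trans ((mul_le_mul hc (Real.abs_cos_le_one B)
            (abs_nonneg _) ((abs_nonneg _).trans hc)).trans_eq (mul_one δ)))
          ((abs_mul _ _).le.trans ((mul_le_mul hs (Real.abs_sin_le_one B)
            (abs_nonneg _) ((abs_nonneg _).trans hs)).trans_eq (mul_one δ)))
      _ = 2 * δ := by ring
  have hsa : |Real.sin (A - B)| ≤ 2 * δ := by
    have : Real.sin (A - B) =
        (Real.sin A - Real.sin B) * Real.cos B -
        (Real.cos A - Real.cos B) * Real.sin B := by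
      rw [Real.sin_sub]; ring
    rw [this]
    calc |(Real.sin A - Real.sin B) * Real.cos B -
          (Real.cos A - Real.cos B) * Real.sin B|
        ≤ |(Real.sin A - Real.sin B) * Real.cos B| +
          |(Real.cos A - Real.cos B) * Real.sin B| := abs_sub _ _
      _ ≤ δ + δ := add_le_add
          ((abs_mul _ _).le.trans ((mul_le_mul hs (Real.abs_cos_le_one B)
            (abs_nonneg _) ((abs_nonneg _).trans hs)).trans_eq (mul_one δ)))
          ((abs_mul _ _).le.trans ((mul_le_mul hc (Real.abs_sin_le_one B)
            (abs_nonneg _) ((abs_nonneg _).trans hc)).trans_eq (mul_one δ)))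
      _ = 2 * δ := by ring
  constructor
  · have : Real.cos (θ + (A - B)) - Real.cos θ =
        Real.cos θ * (Real.cos (A - B) - 1) - Real.sin θ * Real.sin (A - B) := by
      rw [Real.cos_add]; ring
    rw [this]
    calc _ ≤ |Real.cos θ * (Real.cos (A - B) - 1)| + |Real.sin θ * Real.sin (A - B)| :=
          abs_sub _ _
      _ ≤ 1 * (2*δ) + 1 * (2*δ) := by
          rw [abs_mul, abs_mul]
          gcongr <;> first | exact Real.abs_cos_le_one _ | exact Real.abs_sin_le_one _
      _ = 4 * δ := by ring
  · have : Real.sin (θ + (A - B)) - Real.sin θ =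
        Real.sin θ * (Real.cos (A - B) - 1) + Real.cos θ * Real.sin (A - B) := by
      rw [Real.sin_add]; ring
    rw [this]
    calc _ ≤ |Real.sin θ * (Real.cos (A - B) - 1)| + |Real.cos θ * Real.sin (A - B)| :=
          abs_add_le _ _
      _ ≤ 1 * (2*δ) + 1 * (2*δ) := by
          rw [abs_mul, abs_mul]
          gcongr <;> first | exact Real.abs_cos_le_one _ | exact Real.abs_sin_le_one _
      _ = 4 * δ := by ring

/-- A finite `X`-valued trigonometric sum whose norm tends to `0` at `+∞`
vanishes identically. -/
theorem trig_sum_norm_tendsto_zero_eq_zero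
    {X : Type*} [NormedAddCommGroup X] [NormedSpace ℝ X]
    (N : ℕ) (a b : ℕ → X) (ω : ℕ → ℝ) (z : ℝ → X)
    (hz : ∀ t : ℝ, z t = ∑ n ∈ Finset.Icc 1 N,
      (Real.cos (ω n * t) • a n + Real.sin (ω n * t) • b n))
    (hlim : Filter.Tendsto (fun t : ℝ => ‖z t‖) Filter.atTop (nhds 0)) :
    ∀ t : ℝ, z t = 0 := by
  intro t
  rw [← norm_le_zero_iff]
  refine le_of_forall_pos_le_add ?_
  intro ε hε
  rw [zero_add]
  -- constants
  set C : ℝ := ∑ n ∈ Finset.Icc 1 N, (‖a n‖ + ‖b n‖) with hCdef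
  have hC : 0 ≤ C := Finset.sum_nonneg fun n _ =>
    add_nonneg (norm_nonneg _) (norm_nonneg _)
  set δ : ℝ := ε / (8 * (C + 1)) with hδdef
  have hδ : 0 < δ := div_pos hε (by linarith)
  -- eventually small
  obtain ⟨M, hM⟩ := (Metric.tendsto_atTop.mp hlim) (ε/2) (by linarith)
  have hM' : ∀ s ≥ M, ‖z s‖ < ε/2 := by
    intro s hs
    have := hM s hs
    rwa [Real.dist_eq, sub_zero, abs_of_nonneg (norm_nonneg _)] at this
  set T : ℝ := max (M - t) 1 with hTdef
  have hT1 : (1:ℝ) ≤ T := le_max_right _ _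
  have hTM : M - t ≤ T := le_max_left _ _
  -- the pigeonhole sequence
  set ι := ({n // n ∈ Finset.Icc 1 N} × Bool)
  set p : ℕ → ι → ℝ := fun k q =>
    if q.2 then Real.cos (ω q.1.1 * (k * T)) else Real.sin (ω q.1.1 * (k * T))
    with hpdef
  have hb : ∀ k, p k ∈ Metric.closedBall (0 : ι → ℝ) 1 := by
    intro k
    rw [Metric.mem_closedBall, dist_zero_right,
      pi_norm_le_iff_of_nonneg zero_le_one]
    intro q
    by_cases h : q.2 <;>
      simp [hpdef, h, Real.abs_cos_le_one, Real.abs_sin_le_one]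
  obtain ⟨j, k, hjk, hd⟩ := exists_pair_dist_lt p hb hδ
  set τ : ℝ := ((k : ℝ) - j) * T with hτdef
  have hkj : (1:ℝ) ≤ (k : ℝ) - j := by
    have : (j:ℝ) + 1 ≤ k := by exact_mod_cast hjk
    linarith
  have hτT : T ≤ τ := by
    calc T = 1 * T := (one_mul T).symm
    _ ≤ ((k:ℝ) - j) * T := by
        apply mul_le_mul_of_nonneg_right hkj (by linarith)
  have htτ : M ≤ t + τ := by linarith
  -- trig bounds for each n in the sum
  have htrig : ∀ n ∈ Finset.Icc 1 N,
      |Real.cos (ω n * (t + τ)) - Real.cos (ω n * t)| ≤ 4 * δ ∧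
      |Real.sin (ω n * (t + τ)) - Real.sin (ω n * t)| ≤ 4 * δ := by
    intro n hn
    have hcq : ∀ c : Bool, |p j (⟨n, hn⟩, c) - p k (⟨n, hn⟩, c)| ≤ δ := by
      intro c
      have h1 : dist (p j (⟨n, hn⟩, c)) (p k (⟨n, hn⟩, c)) ≤ dist (p j) (p k) :=
        dist_le_pi_dist (p j) (p k) _
      rw [Real.dist_eq] at h1
      exact h1.trans hd.le
    have hc' : |Real.cos (ω n * (k * T)) - Real.cos (ω n * (j * T))| ≤ δ := by
      have := hcq true
      simpa [hpdef, abs_sub_comm] using this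
    have hs' : |Real.sin (ω n * (k * T)) - Real.sin (ω n * (j * T))| ≤ δ := by
      have := hcq false
      simpa [hpdef, abs_sub_comm] using this
    have key := trig_shift_bound hc' hs' (ω n * t)
    have harg : ω n * t + (ω n * (k * T) - ω n * (j * T)) = ω n * (t + τ) := by
      rw [hτdef]; ring
    rwa [harg] at key
  -- assemble
  have hdiff : ‖z t - z (t + τ)‖ ≤ ε/2 := by
    rw [hz t, hz (t + τ), ← Finset.sum_sub_distrib]
    have hterm : ∀ n ∈ Finset.Icc 1 N,
        ‖(Real.cos (ω n * t) • a n + Real.sin (ω n * t) • b n) -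
          (Real.cos (ω n * (t + τ)) • a n + Real.sin (ω n * (t + τ)) • b n)‖ ≤
        4 * δ * (‖a n‖ + ‖b n‖) := by
      intro n hn
      obtain ⟨hcos, hsin⟩ := htrig n hn
      have heq : (Real.cos (ω n * t) • a n + Real.sin (ω n * t) • b n) -
          (Real.cos (ω n * (t + τ)) • a n + Real.sin (ω n * (t + τ)) • b n) =
          (Real.cos (ω n * t) - Real.cos (ω n * (t + τ))) • a n +
          (Real.sin (ω n * t) - Real.sin (ω n * (t + τ))) • b n := by
        rw [sub_smul, sub_smul]; abel
      rw [heq]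
      calc ‖(Real.cos (ω n * t) - Real.cos (ω n * (t + τ))) • a n +
            (Real.sin (ω n * t) - Real.sin (ω n * (t + τ))) • b n‖
          ≤ ‖(Real.cos (ω n * t) - Real.cos (ω n * (t + τ))) • a n‖ +
            ‖(Real.sin (ω n * t) - Real.sin (ω n * (t + τ))) • b n‖ := norm_add_le _ _
        _ = |Real.cos (ω n * t) - Real.cos (ω n * (t + τ))| * ‖a n‖ +
            |Real.sin (ω n * t) - Real.sin (ω n * (t + τ))| * ‖b n‖ := by
            rw [norm_smul, norm_smul, Real.norm_eq_abs, Real.norm_eq_abs]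
        _ ≤ (4 * δ) * ‖a n‖ + (4 * δ) * ‖b n‖ := by
            gcongr
            · rw [abs_sub_comm]; exact hcos
            · rw [abs_sub_comm]; exact hsin
        _ = 4 * δ * (‖a n‖ + ‖b n‖) := by ring
    calc ‖∑ n ∈ Finset.Icc 1 N,
          ((Real.cos (ω n * t) • a n + Real.sin (ω n * t) • b n) -
           (Real.cos (ω n * (t + τ)) • a n + Real.sin (ω n * (t + τ)) • b n))‖
        ≤ ∑ n ∈ Finset.Icc 1 N, (4 * δ * (‖a n‖ + ‖b n‖)) :=
          norm_sum_le_of_le _ hterm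
      _ = 4 * δ * C := by rw [← Finset.mul_sum]
      _ ≤ 4 * δ * (C + 1) := by nlinarith
      _ = ε/2 := by rw [hδdef]; field_simp; ring
  calc ‖z t‖ ≤ ‖z t - z (t + τ)‖ + ‖z (t + τ)‖ := by
        have := norm_add_le (z t - z (t + τ)) (z (t + τ)); simpa using this
    _ ≤ ε/2 + ε/2 := add_le_add hdiff (hM' _ htτ).le
    _ = ε := by ring
end
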